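/- arXiv:1603.00681 — 2 statements merged into one kernel-verified Lean document; each statement's English description precedes it below -/
import Mathlib

section
/- Let a, b be real numbers with a > 0 and b > 0, and let α = (a*b + √(a²b² + 4ab))/2 and β = (a*b − √(a²b² + 4ab))/2. Then for all natural numbers n, r with n ≥ r, r even, r ≥ 2 and n even, the bi-periodic Fibonacci numbers satisfy q (n−r) * q (n+r) − (q n)² = a² * (2*(a*b)^r − α^(2r) − β^(2r)) / ((a*b)^r * (α − β)²). (This is the even-n case of the scalar analogue of the paper's Catalan-type theorem for even r.) -/
/-!
Binet's formula for even indices, `q (2m) (ab)^m (α - β) = a (α^(2m) - β^(2m))`, holds for any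
two roots of `x² = ab x + ab` and is proved together with its odd-index companion by induction.
Substituting it, the claim becomes the identity
`(x^k - y^k)(x^(k+2j) - y^(k+2j)) - (x^(k+j) - y^(k+j))² = (xy)^k (2(xy)^j - x^(2j) - y^(2j))`,
and since `αβ = -ab` while all exponents of `αβ` are even, `(αβ)^k = (ab)^k`.
-/

theorem sub_pow_mul_sub_pow_sub_sq {R : Type*} [CommRing R] (x y : R) (k j : ℕ) :
    (x ^ k - y ^ k) * (x ^ (k + 2 * j) - y ^ (k + 2 * j)) - (x ^ (k + j) - y ^ (k + j)) ^ 2 =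
      (x * y) ^ k * (2 * (x * y) ^ j - x ^ (2 * j) - y ^ (2 * j)) := by
  ring

theorem mul_eq_neg_of_eq_quadratic_roots {p α β : ℝ} (hp : 0 ≤ p ^ 2 + 4 * p)
    (hα : α = (p + √(p ^ 2 + 4 * p)) / 2) (hβ : β = (p - √(p ^ 2 + 4 * p)) / 2) :
    α * β = -p := by
  have hsq := Real.sq_sqrt hp
  rw [hα, hβ]
  linear_combination -hsq / 4

section Biperiodic

variable {a b : ℝ} {q : ℤ → ℝ}

theorem biperiodic_even_step (hqe : ∀ n : ℤ, Even n → q n = a * q (n - 1) + q (n - 2))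
    (m : ℤ) :
    q (2 * (m + 1)) = a * q (2 * m + 1) + q (2 * m) := by
  rw [hqe _ (even_two_mul _)]
  ring_nf

theorem biperiodic_odd_step (hqo : ∀ n : ℤ, Odd n → q n = b * q (n - 1) + q (n - 2))
    (m : ℤ) :
    q (2 * m + 1) = b * q (2 * m) + q (2 * m - 1) := by
  rw [hqo _ (odd_two_mul_add_one _)]
  ring_nf

theorem biperiodic_binet (hq0 : q 0 = 0) (hq1 : q 1 = 1)
    (hqe : ∀ n : ℤ, Even n → q n = a * q (n - 1) + q (n - 2))
    (hqo : ∀ n : ℤ, Odd n → q n = b * q (n - 1) + q (n - 2))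
    {α β : ℝ} (hα : α ^ 2 = a * b * α + a * b) (hβ : β ^ 2 = a * b * β + a * b)
    (m : ℕ) :
    q (2 * m) * ((a * b) ^ m * (α - β)) = a * (α ^ (2 * m) - β ^ (2 * m)) ∧
      q (2 * m + 1) * ((a * b) ^ m * (α - β)) = α ^ (2 * m + 1) - β ^ (2 * m + 1) := by
  induction m with
  | zero => simp [hq0, hq1]
  | succ k ih =>
    obtain ⟨ih_even, ih_odd⟩ := ih
    have h_even : q (2 * (k + 1 : ℕ)) * ((a * b) ^ (k + 1) * (α - β)) =
        a * (α ^ (2 * (k + 1)) - β ^ (2 * (k + 1))) := by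
      rw [Nat.cast_succ, biperiodic_even_step hqe]
      linear_combination a * (a * b) * ih_odd + a * b * ih_even - a * α ^ (2 * k) * hα +
        a * β ^ (2 * k) * hβ
    refine ⟨h_even, ?_⟩
    rw [biperiodic_odd_step hqo, show 2 * ((k + 1 : ℕ) : ℤ) - 1 = 2 * k + 1 by push_cast; ring]
    linear_combination b * h_even + a * b * ih_odd - α ^ (2 * k + 1) * hα +
      β ^ (2 * k + 1) * hβ

variable {α β : ℝ}

theorem biperiodic_catalan_even
    (hbinet : ∀ m : ℕ,
      q (2 * m) * ((a * b) ^ m * (α - β)) = a * (α ^ (2 * m) - β ^ (2 * m)))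
    (hprod : α * β = -(a * b)) (hab : a * b ≠ 0) (hαβ : α ≠ β) (t j : ℕ) :
    q (2 * t) * q (2 * (t + 2 * j : ℕ)) - q (2 * (t + j : ℕ)) ^ 2 =
      a ^ 2 * (2 * (a * b) ^ (2 * j) - α ^ (2 * (2 * j)) - β ^ (2 * (2 * j))) /
        ((a * b) ^ (2 * j) * (α - β) ^ 2) := by
  rw [eq_div_iff (mul_ne_zero (pow_ne_zero _ hab) (pow_ne_zero _ (sub_ne_zero.mpr hαβ)))]
  apply mul_left_cancel₀ (pow_ne_zero (2 * t) hab)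
  calc (a * b) ^ (2 * t) * ((q (2 * t) * q (2 * (t + 2 * j : ℕ)) - q (2 * (t + j : ℕ)) ^ 2) *
        ((a * b) ^ (2 * j) * (α - β) ^ 2))
      = q (2 * t) * ((a * b) ^ t * (α - β)) *
          (q (2 * (t + 2 * j : ℕ)) * ((a * b) ^ (t + 2 * j) * (α - β))) -
          (q (2 * (t + j : ℕ)) * ((a * b) ^ (t + j) * (α - β))) ^ 2 := by ring
    _ = a ^ 2 * ((α ^ (2 * t) - β ^ (2 * t)) *
          (α ^ (2 * t + 2 * (2 * j)) - β ^ (2 * t + 2 * (2 * j))) -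
          (α ^ (2 * t + 2 * j) - β ^ (2 * t + 2 * j)) ^ 2) := by
      rw [hbinet, hbinet, hbinet]; ring
    _ = a ^ 2 * ((α * β) ^ (2 * t) *
          (2 * (α * β) ^ (2 * j) - α ^ (2 * (2 * j)) - β ^ (2 * (2 * j)))) := by
      rw [sub_pow_mul_sub_pow_sub_sq]
    _ = _ := by
      rw [hprod, (even_two_mul t).neg_pow, (even_two_mul j).neg_pow]; ring

end Biperiodic

theorem biperiodic_fib_catalan_even_n (a b : ℝ) (ha : 0 < a) (hb : 0 < b)
    (q : ℤ → ℝ) (hq0 : q 0 = 0) (hq1 : q 1 = 1)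
    (hqe : ∀ n : ℤ, Even n → q n = a * q (n - 1) + q (n - 2))
    (hqo : ∀ n : ℤ, Odd n → q n = b * q (n - 1) + q (n - 2))
    (α β : ℝ)
    (hα : α = (a * b + Real.sqrt (a ^ 2 * b ^ 2 + 4 * (a * b))) / 2)
    (hβ : β = (a * b - Real.sqrt (a ^ 2 * b ^ 2 + 4 * (a * b))) / 2) :
    ∀ n r : ℕ, r ≤ n → Even r → 2 ≤ r → Even n →
      q ((n : ℤ) - r) * q ((n : ℤ) + r) - (q (n : ℤ)) ^ 2 =
        a ^ 2 * (2 * (a * b) ^ r - α ^ (2 * r) - β ^ (2 * r)) /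
          ((a * b) ^ r * (α - β) ^ 2) := by
  rintro n r hrn ⟨j, rfl⟩ - ⟨m, rfl⟩
  obtain ⟨t, rfl⟩ : ∃ t, m = t + j := ⟨m - j, by omega⟩
  have hab : 0 < a * b := mul_pos ha hb
  have hdisc : 0 < (a * b) ^ 2 + 4 * (a * b) := by positivity
  rw [← mul_pow] at hα hβ
  have hprod : α * β = -(a * b) := mul_eq_neg_of_eq_quadratic_roots hdisc.le hα hβ
  have hsum : α + β = a * b := by rw [hα, hβ]; ring
  have hαβ : α ≠ β :=
    (sub_pos.mp (by rw [hα, hβ]; linarith [Real.sqrt_pos.mpr hdisc])).ne'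
  have hbinet m := (biperiodic_binet hq0 hq1 hqe hqo (by linear_combination α * hsum - hprod)
    (by linear_combination β * hsum - hprod) m).1
  convert biperiodic_catalan_even hbinet hprod hab.ne' hαβ t j using 4 <;> push_cast <;> ring_nf
end

section
/- For all real numbers a, b, the formal power series identity (1 − (a*b + 2)*X² + X⁴) * F(X) = X − X³ holds in ℝ⟦X⟧, where F(X) is the formal power series whose n-th coefficient is q n if n is odd and 0 if n is even. (This is the generating function of the odd-subscripted bi-periodic Fibonacci numbers, Equation (7), used in the proof of the paper's generating function theorem.) -/
/-!
Eliminating the even-indexed terms from three consecutive instances of the recurrence gives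
`q (n + 4) = (a * b + 2) * q (n + 2) - q n` for odd `n`. The odd part of `q` therefore satisfies
a recurrence with characteristic polynomial `1 - (a * b + 2) X² + X⁴`, so multiplying its
generating function by this polynomial leaves only the coefficients of degree at most 3,
which come from `q 1 = 1` and `q 3 = a * b + 1`.
-/

open PowerSeries

theorem PowerSeries.one_sub_C_mul_X_sq_add_X_pow_four_mul_mk {R : Type*} [Ring R] (c : R)
    (f : ℕ → R) (hf : ∀ n, f (n + 4) = c * f (n + 2) - f n) :
    (1 - C c * X ^ 2 + X ^ 4) * mk f =
      C (f 0) + C (f 1) * X + C (f 2 - c * f 0) * X ^ 2 + C (f 3 - c * f 1) * X ^ 3 := by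
  ext n
  rw [add_mul, sub_mul, one_mul, mul_assoc]
  simp only [map_add, LinearMap.map_sub, coeff_C_mul, coeff_X_pow_mul', coeff_mk, coeff_C,
    coeff_X, coeff_X_pow]
  match n with
  | 0 | 1 | 2 | 3 => simp
  | n + 4 => simp [hf]

theorem odd_part_recurrence {R : Type*} [Ring R] {c : R} {q : ℤ → R}
    (hq : ∀ n : ℤ, Odd n → q (n + 4) = c * q (n + 2) - q n) (n : ℕ) :
    (if Odd (n + 4) then q ↑(n + 4) else 0) =
      c * (if Odd (n + 2) then q ↑(n + 2) else 0) - if Odd n then q n else 0 := by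
  rcases Nat.even_or_odd n with hn | hn
  · simp [Nat.not_odd_iff_even.2 hn, parity_simps]
  · simpa [hn, parity_simps] using hq n (by exact_mod_cast hn.natCast)

section Biperiodic

variable {a b : ℝ} {q : ℤ → ℝ}

theorem biperiodic_odd_recurrence
    (hqe : ∀ n : ℤ, Even n → q n = a * q (n - 1) + q (n - 2))
    (hqo : ∀ n : ℤ, Odd n → q n = b * q (n - 1) + q (n - 2)) {n : ℤ} (hn : Odd n) :
    q (n + 4) = (a * b + 2) * q (n + 2) - q n := by
  have h4 := hqo (n + 4) (hn.add_even (by decide))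
  have h3 := hqe (n + 3) (hn.add_odd (by decide))
  have h2 := hqo (n + 2) (hn.add_even (by decide))
  simp only [show n + 4 - 1 = n + 3 by ring, show n + 4 - 2 = n + 2 by ring,
    show n + 3 - 1 = n + 2 by ring, show n + 3 - 2 = n + 1 by ring,
    show n + 2 - 1 = n + 1 by ring, show n + 2 - 2 = n by ring] at h4 h3 h2
  linear_combination h4 + b * h3 - h2

theorem biperiodic_three (hq0 : q 0 = 0) (hq1 : q 1 = 1)
    (hqe : ∀ n : ℤ, Even n → q n = a * q (n - 1) + q (n - 2))
    (hqo : ∀ n : ℤ, Odd n → q n = b * q (n - 1) + q (n - 2)) :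
    q 3 = a * b + 1 := by
  have h3 := hqo 3 (by decide)
  have h2 := hqe 2 (by decide)
  norm_num [hq0, hq1] at h3 h2
  rw [h3, h2]
  ring

end Biperiodic

theorem biperiodic_fib_odd_gen_fun (a b : ℝ)
    (q : ℤ → ℝ) (hq0 : q 0 = 0) (hq1 : q 1 = 1)
    (hqe : ∀ n : ℤ, Even n → q n = a * q (n - 1) + q (n - 2))
    (hqo : ∀ n : ℤ, Odd n → q n = b * q (n - 1) + q (n - 2)) :
    (1 - PowerSeries.C (a * b + 2) * PowerSeries.X ^ 2 + PowerSeries.X ^ 4) *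
        PowerSeries.mk (fun n : ℕ => if Odd n then q n else 0) =
      PowerSeries.X - PowerSeries.X ^ 3 := by
  set f : ℕ → ℝ := fun n => if Odd n then q n else 0
  have hf0 : f 0 = 0 := if_neg (by decide)
  have hf1 : f 1 = 1 := (if_pos (by decide)).trans hq1
  have hf2 : f 2 = 0 := if_neg (by decide)
  have hf3 : f 3 - (a * b + 2) * f 1 = -1 := by
    rw [hf1, show f 3 = q 3 from if_pos (by decide), biperiodic_three hq0 hq1 hqe hqo]
    ring
  rw [one_sub_C_mul_X_sq_add_X_pow_four_mul_mk _ _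
      (odd_part_recurrence fun _ => biperiodic_odd_recurrence hqe hqo),
    hf3, hf0, hf1, hf2]
  simp [sub_eq_add_neg]
end
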